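/- arXiv:1906.05853 — 3 statements merged into one kernel-verified Lean document; each statement's English description precedes it below -/
import Mathlib

section
/- Let A be a commutative ring, and let G be a finitely generated A-module with a surjection q : G → F onto a module F. Let φ : G → Hom(⋀^{r-1} G, ⋀^r G) be given by g ↦ (g₁∧…∧g_{r-1} ↦ g₁∧…∧g_{r-1}∧g), and let ψ : Hom(⋀^{r-1}G, ⋀^rG) → Hom(⋀^{r-1}G, W) be post-composition with a morphism ⋀^r G → W. If F is a free module of rank r and W = ⋀^r F with ⋀^r G → ⋀^r F the induced map ⋀^r q, then ker(ψ ∘ φ) = ker(q), so F ≅ Im(ψ ∘ φ). -/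
/-!
Write the rank of `F` as `m + 1`, pick a basis `e₀, …, e_m` of `F` and lift `e₀, …, e_{m-1}`
to `G`. The wedge `x` of these lifts lies in `⋀^m G`, and the determinant of the basis, applied
to `(⋀ q)(x ∧ g) = e₀ ∧ ⋯ ∧ e_{m-1} ∧ q g`, is the last coordinate of `q g`. Reordering the
basis makes any coordinate of `q g` the last one.
-/

open ExteriorAlgebra

namespace Module.Basis

variable {A M : Type*} [CommRing A] [AddCommGroup M] [Module A M]

theorem det_update_self {ι : Type*} [Fintype ι] [DecidableEq ι] (e : Basis ι A M) (i : ι)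
    (y : M) : e.det (Function.update e i y) = e.coord i y := by
  suffices e.det.toMultilinearMap.toLinearMap e i = e.coord i from LinearMap.congr_fun this y
  refine e.ext fun k => ?_
  rcases eq_or_ne k i with rfl | hki
  · simp [det_self]
  · simpa [hki] using e.det.map_eq_zero_of_eq _ (by simp [hki]) hki

theorem det_snoc_castSucc {n : ℕ} (e : Basis (Fin (n + 1)) A M) (y : M) :
    e.det (Fin.snoc (fun j => e j.castSucc) y) = e.coord (Fin.last n) y := by
  rw [← e.det_update_self, ← Fin.update_snoc_last (x := e (Fin.last n))]
  exact congrArg (fun v => e.det (Function.update v _ y)) (Fin.snoc_init_self (q := ⇑e))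

end Module.Basis

namespace ExteriorAlgebra

variable {A M : Type*} [CommRing A] [AddCommGroup M] [Module A M]

theorem ιMulti_snoc {n : ℕ} (v : Fin n → M) (y : M) :
    ιMulti A (n + 1) (Fin.snoc v y) = ιMulti A n v * ι A y := by
  rw [ιMulti_apply, ιMulti_apply, List.ofFn_succ', List.concat_eq_append, List.prod_append,
    List.prod_singleton]
  simp only [Fin.snoc_castSucc, Fin.snoc_last]

theorem _root_.AlternatingMap.map_eq_zero_of_ιMulti_eq_zero {N : Type*} [AddCommGroup N]
    [Module A N] {n : ℕ} (f : M [⋀^Fin n]→ₗ[A] N) {v : Fin n → M} (hv : ιMulti A n v = 0) :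
    f v = 0 := by
  classical
  simpa using congrArg (liftAlternating (Pi.single n f)) hv

end ExteriorAlgebra

theorem Module.Basis.coord_last_eq_zero_of_forall_map_mul_ι_eq_zero {A G F : Type*}
    [CommRing A] [AddCommGroup G] [Module A G] [AddCommGroup F] [Module A F]
    {q : G →ₗ[A] F} (hq : Function.Surjective q) {m : ℕ} (e : Basis (Fin (m + 1)) A F) {g : G}
    (H : ∀ x ∈ ⋀[A]^m G, ExteriorAlgebra.map q (x * ι A g) = 0) :
    e.coord (Fin.last m) (q g) = 0 := by
  choose u hu using fun j : Fin m => hq (e j.castSucc)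
  have hmap : ExteriorAlgebra.map q (ιMulti A m u * ι A g) =
      ιMulti A (m + 1) (Fin.snoc (fun j => e j.castSucc) (q g)) := by
    rw [← ιMulti_snoc, map_apply_ιMulti, Fin.comp_snoc, Function.comp_def]
    simp only [hu]
  rw [← e.det_snoc_castSucc]
  exact e.det.map_eq_zero_of_ιMulti_eq_zero (hmap ▸ H _ (ιMulti_range A m ⟨u, rfl⟩))

theorem determinant_trick_free_general {A G F : Type*} [CommRing A]
    [AddCommGroup G] [Module A G] [AddCommGroup F] [Module A F]
    [Module.Free A F] (r : ℕ)
    (hr : Module.finrank A F = r)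
    (q : G →ₗ[A] F) (hq : Function.Surjective q) :
    ∀ g : G,
      (∀ x ∈ ((LinearMap.range (ι A : G →ₗ[A] ExteriorAlgebra A G)) ^ (r - 1) :
          Submodule A (ExteriorAlgebra A G)),
        ExteriorAlgebra.map q (x * ι A g) = 0) ↔ q g = 0 := by
  intro g
  refine ⟨fun H => ?_, fun h x _ => by rw [map_mul, map_apply_ι, h, map_zero, mul_zero]⟩
  nontriviality F
  have : Nontrivial A := Module.nontrivial A F
  cases r with
  | zero =>
    -- `0 - 1 = 0` in `ℕ`, so `x = 1` is allowed.
    simpa using H 1 (Submodule.one_le.mp le_rfl)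
  | succ m =>
    have := Module.finite_of_finrank_eq_succ hr
    let b := Module.finBasisOfFinrankEq A F hr
    refine b.forall_coord_eq_zero_iff.mp fun i => ?_
    simpa [Module.Basis.coord_apply, Module.Basis.repr_reindex_apply] using
      (b.reindex (Equiv.swap i (Fin.last m))).coord_last_eq_zero_of_forall_map_mul_ι_eq_zero hq H

/-- The determinant trick (Lemma 4.2 of the paper) in the case where the quotient
is free: let `q : G → F` be a surjection of `A`-modules with `G` finitely
generated and `F` free of rank `r`.  The composite `ψ ∘ φ` sends `g : G` to the
homomorphism `⋀^{r-1} G → ⋀^r F`, `x ↦ (⋀^r q)(x ∧ g)`.  Its kernel equals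
`ker q`; i.e. `g ∈ ker q` iff `(⋀^r q)(x ∧ g) = 0` for every
`x ∈ ⋀^{r-1} G ⊆ ⋀ G`.  Consequently `F ≅ Im (ψ ∘ φ)`. -/
theorem determinant_trick_free {A G F : Type*} [CommRing A]
    [AddCommGroup G] [Module A G] [AddCommGroup F] [Module A F]
    [Module.Finite A G] [Module.Free A F] (r : ℕ)
    (hr : Module.finrank A F = r)
    (q : G →ₗ[A] F) (hq : Function.Surjective q) :
    ∀ g : G,
      (∀ x ∈ ((LinearMap.range (ι A : G →ₗ[A] ExteriorAlgebra A G)) ^ (r - 1) :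
          Submodule A (ExteriorAlgebra A G)),
        ExteriorAlgebra.map q (x * ι A g) = 0) ↔ q g = 0 :=
  determinant_trick_free_general r hr q hq
end

section
/- Let X be a reduced complex space (or integral scheme) of pure dimension n, U ⊂ X a dense Zariski-open subset, and G a coherent sheaf on X. If q₁ : G → F₁ and q₂ : G → F₂ are two surjections onto pure n-dimensional sheaves such that ker(q₁)|_U = ker(q₂)|_U as subsheaves of G|_U, then ker(q₁) = ker(q₂), hence the two quotients coincide. -/
/-- A module is pure of dimension `n` if it is nonzero and all of its nonzero
submodules have support of Krull dimension `n`. -/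
def IsPureDimMod (A : Type*) [CommRing A] (n : ℕ)
    (M : Type*) [AddCommGroup M] [Module A M] : Prop :=
  Nontrivial M ∧
    ∀ p : Submodule A M, p ≠ ⊥ →
      Order.krullDim (Module.support A ↥p) = (n : WithBot ℕ∞)

/-! The generic point `⊥` of `Spec A` lies in every dense open set, so the two kernels have the
same localization at `(0)`. Hence `q₂` maps `ker q₁` onto a torsion submodule of `F₂`, whose
support misses the generic point. Every chain of primes in that support can be extended below by
`(0)`, so the support has dimension less than `dim A = n`, and purity of `F₂` forces the image to
vanish: `ker q₁ ≤ ker q₂`. Symmetrically `ker q₂ ≤ ker q₁`. -/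

open Order in
theorem Order.krullDim_add_one_le_of_bot_notMem {α : Type*} [PartialOrder α] [OrderBot α]
    {S : Set α} (hS : ⊥ ∉ S) : krullDim S + 1 ≤ krullDim α := by
  rcases isEmpty_or_nonempty S with _ | _
  · simp [krullDim_eq_bot]
  rw [← krullDim_withBot]
  refine krullDim_le_of_strictMono (WithBot.recBotCoe ⊥ Subtype.val) ?_
  rintro (_ | s) (_ | t) hxy
  · exact absurd hxy (lt_irrefl _)
  · exact bot_lt_iff_ne_bot.mpr fun h => hS (h ▸ t.2)
  · exact absurd hxy not_lt_bot
  · exact (WithBot.coe_lt_coe.mp hxy : s < t)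

theorem PrimeSpectrum.isGenericPoint_bot (A : Type*) [CommRing A] [IsDomain A] :
    IsGenericPoint (⊥ : PrimeSpectrum A) Set.univ := by
  rw [IsGenericPoint, closure_singleton]
  exact zeroLocus_bot

theorem PrimeSpectrum.bot_mem_of_isOpen_of_dense {A : Type*} [CommRing A] [IsDomain A]
    {U : Set (PrimeSpectrum A)} (hU : IsOpen U) (hd : Dense U) : ⊥ ∈ U :=
  ((isGenericPoint_bot A).mem_open_set_iff hU).mpr (by simpa using hd.nonempty)

theorem LinearMap.exists_smul_eq_zero_of_localized_le_localized_ker {A G F : Type*} [CommRing A]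
    [AddCommGroup G] [Module A G] [AddCommGroup F] [Module A F] {S : Submonoid A}
    {K : Submodule A G} {q : G →ₗ[A] F} (h : K.localized S ≤ (ker q).localized S)
    {x : G} (hx : x ∈ K) : ∃ s ∈ S, s • q x = 0 := by
  have hmem : LocalizedModule.mkLinearMap S G x ∈
      ker (IsLocalizedModule.map S (LocalizedModule.mkLinearMap S G)
        (LocalizedModule.mkLinearMap S F) q) := by
    rw [ker_localizedMap_eq_localized₀_ker]
    exact h ⟨x, hx, 1, IsLocalizedModule.mk'_one _ _ _⟩
  rw [mem_ker, IsLocalizedModule.map_apply] at hmem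
  exact LocalizedModule.mem_ker_mkLinearMap_iff.mp hmem

theorem IsPureDimMod.eq_bot_of_bot_notMem_support {A F : Type*} [CommRing A] [IsDomain A]
    [AddCommGroup F] [Module A F] {n : ℕ} (hA : ringKrullDim A ≤ n) (hF : IsPureDimMod A n F)
    {N : Submodule A F} (hN : ⊥ ∉ Module.support A N) : N = ⊥ := by
  by_contra hne
  have hlt : (n : WithBot ℕ∞) + 1 ≤ n :=
    calc (n : WithBot ℕ∞) + 1 = Order.krullDim (Module.support A N) + 1 := by rw [hF.2 N hne]
      _ ≤ ringKrullDim A := Order.krullDim_add_one_le_of_bot_notMem hN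
      _ ≤ n := hA
  exact absurd hlt (by exact_mod_cast n.not_succ_le_self)

theorem IsPureDimMod.le_ker_of_localized_bot_le {A G F : Type*} [CommRing A] [IsDomain A]
    [AddCommGroup G] [Module A G] [AddCommGroup F] [Module A F] {n : ℕ}
    (hA : ringKrullDim A ≤ n) {q : G →ₗ[A] F} (hF : IsPureDimMod A n F) {K : Submodule A G}
    (h : K.localized (⊥ : PrimeSpectrum A).asIdeal.primeCompl ≤
      (LinearMap.ker q).localized (⊥ : PrimeSpectrum A).asIdeal.primeCompl) :
    K ≤ LinearMap.ker q := by
  refine LinearMap.le_ker_iff_map.mpr (hF.eq_bot_of_bot_notMem_support hA ?_)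
  rw [Module.notMem_support_iff']
  rintro ⟨_, x, hx, rfl⟩
  obtain ⟨s, hs, hsx⟩ := LinearMap.exists_smul_eq_zero_of_localized_le_localized_ker h hx
  exact ⟨s, hs, Subtype.ext hsx⟩

theorem pure_quotients_determined_generically_general
    {A : Type*} [CommRing A] [IsDomain A] (n : ℕ)
    (hA : ringKrullDim A = (n : WithBot ℕ∞))
    {G F₁ F₂ : Type*} [AddCommGroup G] [Module A G]
    [AddCommGroup F₁] [Module A F₁] [AddCommGroup F₂] [Module A F₂]
    (q₁ : G →ₗ[A] F₁)
    (q₂ : G →ₗ[A] F₂)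
    (hF₁ : IsPureDimMod A n F₁) (hF₂ : IsPureDimMod A n F₂)
    (U : Set (PrimeSpectrum A)) (hUopen : IsOpen U) (hUdense : Dense U)
    (hker : ∀ p ∈ U,
      (LinearMap.ker q₁).localized p.asIdeal.primeCompl =
        (LinearMap.ker q₂).localized p.asIdeal.primeCompl) :
    LinearMap.ker q₁ = LinearMap.ker q₂ := by
  have hgen := hker ⊥ (PrimeSpectrum.bot_mem_of_isOpen_of_dense hUopen hUdense)
  exact le_antisymm (hF₂.le_ker_of_localized_bot_le hA.le hgen.le)
    (hF₁.le_ker_of_localized_bot_le hA.le hgen.ge)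

/-- Pure quotients are determined by their restriction to a dense Zariski-open
subset (Lemma 4.1 of the paper), in the case of an integral (affine) scheme
`X = Spec A` of pure dimension `n`.  If `q₁ : G → F₁` and `q₂ : G → F₂` are two
surjections from a coherent sheaf `G` (a finitely generated `A`-module) onto
pure `n`-dimensional sheaves, whose kernels agree on a dense Zariski-open subset
`U` (i.e. have equal localizations at every point of `U`), then
`ker q₁ = ker q₂`, hence the two quotients coincide. -/
theorem pure_quotients_determined_generically
    {A : Type*} [CommRing A] [IsDomain A] [IsNoetherianRing A] (n : ℕ)
    (hA : ringKrullDim A = (n : WithBot ℕ∞))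
    {G F₁ F₂ : Type*} [AddCommGroup G] [Module A G] [Module.Finite A G]
    [AddCommGroup F₁] [Module A F₁] [AddCommGroup F₂] [Module A F₂]
    (q₁ : G →ₗ[A] F₁) (hq₁ : Function.Surjective q₁)
    (q₂ : G →ₗ[A] F₂) (hq₂ : Function.Surjective q₂)
    (hF₁ : IsPureDimMod A n F₁) (hF₂ : IsPureDimMod A n F₂)
    (U : Set (PrimeSpectrum A)) (hUopen : IsOpen U) (hUdense : Dense U)
    (hker : ∀ p ∈ U,
      (LinearMap.ker q₁).localized p.asIdeal.primeCompl =
        (LinearMap.ker q₂).localized p.asIdeal.primeCompl) :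
    LinearMap.ker q₁ = LinearMap.ker q₂ :=
  pure_quotients_determined_generically_general n hA q₁ q₂ hF₁ hF₂ U hUopen hUdense hker
end

section
/- On the chart ℂ^{r} ⊂ ℙ^{r} with w = (1, w₂, …, w_r), the (1,1)-form η := (i/2π) ∂∂̄ log(|f(z,w)|² + |w|²), where f(z,w) = Σⱼ wⱼ fⱼ(z) with fⱼ holomorphic in z ∈ ℂ and w treated as parameters, decomposes at a point where all fⱼ vanish as η = (i/2π)(|Σⱼ fⱼ'(z) wⱼ|² / |w|²) dz∧dz̄ + ω_FS, where ω_FS = (i/2π)∂∂̄ log|w|² is the Fubini–Study form in w; consequently η^{r} = (r·i/2π)(|Σⱼ fⱼ'(z) wⱼ|²/|w|²) dz∧dz̄ ∧ ω_FS^{r−1} at such a point, and η^{r+p} has vanishing fibre integral component for p > 0. -/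
open scoped BigOperators

/-- The Wirtinger derivative `∂g/∂z = ½(∂g/∂x − i ∂g/∂y)`. -/
noncomputable def wirtD (g : ℂ → ℂ) (z : ℂ) : ℂ :=
  ((fderiv ℝ g z) 1 - Complex.I * (fderiv ℝ g z) Complex.I) / 2

/-- The conjugate Wirtinger derivative `∂g/∂z̄ = ½(∂g/∂x + i ∂g/∂y)`. -/
noncomputable def wirtDBar (g : ℂ → ℂ) (z : ℂ) : ℂ :=
  ((fderiv ℝ g z) 1 + Complex.I * (fderiv ℝ g z) Complex.I) / 2

/-- The potential `log(|∑ⱼ wⱼ fⱼ(z)|² + |w|²)` of the form `η` of Lemma 3.6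
(viewed as a complex-valued function for the purpose of differentiation). -/
noncomputable def etaPot {r : ℕ} (f : Fin r → ℂ → ℂ) (z : ℂ) (w : Fin r → ℂ) : ℂ :=
  (Real.log (‖∑ j, w j * f j z‖ ^ 2 + ∑ j, ‖w j‖ ^ 2) : ℂ)

/-- The Fubini–Study potential `log |w|²`. -/
noncomputable def fsPot {r : ℕ} (w : Fin r → ℂ) : ℂ :=
  (Real.log (∑ j, ‖w j‖ ^ 2) : ℂ)

/-!
With `F = ∑ⱼ wⱼ fⱼ` and `c = |w|²` the potential is `log (|F|² + c)`, whose real differential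
is `(F̄ F' dz + F F̄' dz̄) / (|F|² + c)`. At a zero `z₀` of `F` the `∂`-part vanishes, and by the
product rule `∂ (F · F̄' / (|F|² + c))` reduces to `F'(z₀) F̄'(z₀) / c`. On the fibre `z = z₀`
the potential is `log |w|²` itself, so the `w`-coefficients are those of `ω_FS`.
-/

open Complex ComplexConjugate

noncomputable def wirtingerCLM (p q : ℂ) : ℂ →L[ℝ] ℂ :=
  p • ContinuousLinearMap.id ℝ ℂ + q • conjCLE.toContinuousLinearMap

@[simp]
theorem wirtingerCLM_apply (p q v : ℂ) : wirtingerCLM p q v = p * v + q * conj v := rfl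

section Wirtinger

variable {g : ℂ → ℂ} {z p q : ℂ}

theorem wirtD_eq_of_hasFDerivAt (hg : HasFDerivAt g (wirtingerCLM p q) z) : wirtD g z = p := by
  rw [wirtD, hg.fderiv]
  simp only [wirtingerCLM_apply, map_one, conj_I]
  linear_combination (-(p - q) / 2) * I_mul_I

theorem wirtDBar_eq_of_hasFDerivAt (hg : HasFDerivAt g (wirtingerCLM p q) z) :
    wirtDBar g z = q := by
  rw [wirtDBar, hg.fderiv]
  simp only [wirtingerCLM_apply, map_one, conj_I]
  linear_combination ((p - q) / 2) * I_mul_I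

end Wirtinger

section LogNormSqAdd

variable {F : ℂ → ℂ} {c : ℝ}

theorem ofReal_log_normSq_add (hc : 0 < c) (u : ℂ) :
    (Real.log (‖u‖ ^ 2 + c) : ℂ) = log (u * conj u + c) := by
  rw [mul_conj, ← normSq_eq_norm_sq, ← ofReal_add,
    ofReal_log (add_pos_of_nonneg_of_pos (normSq_nonneg u) hc).le]

theorem hasFDerivAt_log_normSq_add {z : ℂ} (hF : DifferentiableAt ℂ F z) (hc : 0 < c) :
    HasFDerivAt (fun z' => (Real.log (‖F z'‖ ^ 2 + c) : ℂ))
      (wirtingerCLM (conj (F z) * deriv F z / (F z * conj (F z) + c))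
        (F z * conj (deriv F z) / (F z * conj (F z) + c))) z := by
  have hDF := hF.hasDerivAt.hasFDerivAt.restrictScalars ℝ
  have hD := (hDF.mul (conjCLE.hasFDerivAt.comp z hDF)).add_const (c : ℂ)
  have hslit : F z * conj (F z) + c ∈ slitPlane := by
    rw [mul_conj, ← ofReal_add]
    exact ofReal_mem_slitPlane.mpr (add_pos_of_nonneg_of_pos (normSq_nonneg _) hc)
  have hlog := ((hasDerivAt_log hslit).hasFDerivAt.restrictScalars ℝ).comp z hD
  rw [funext fun z' => ofReal_log_normSq_add hc (F z')]
  refine hlog.congr_fderiv ?_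
  ext v
  simp only [ContinuousAlgEquiv.coe_coeCLE, Function.comp_apply, conjCAE_apply,
    ContinuousLinearMap.comp_add, add_apply, ContinuousLinearMap.comp_apply, smul_apply,
    ContinuousLinearMap.coe_restrictScalars', smul_eq_mul, ContinuousLinearEquiv.coe_coe,
    ContinuousAlgEquiv.coeCLE_apply, map_mul, ContinuousLinearMap.toSpanSingleton_apply,
    wirtingerCLM_apply]
  ring

theorem wirtD_log_normSq_add_eq_zero {z : ℂ} (hF : DifferentiableAt ℂ F z) (hc : 0 < c)
    (h0 : F z = 0) : wirtD (fun z' => (Real.log (‖F z'‖ ^ 2 + c) : ℂ)) z = 0 := by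
  simp [wirtD_eq_of_hasFDerivAt (hasFDerivAt_log_normSq_add hF hc), h0]

theorem wirtD_wirtDBar_log_normSq_add {z₀ : ℂ} (hF : Differentiable ℂ F) (hc : 0 < c)
    (h0 : F z₀ = 0) :
    wirtD (fun z => wirtDBar (fun z' => (Real.log (‖F z'‖ ^ 2 + c) : ℂ)) z) z₀ =
      (‖deriv F z₀‖ : ℂ) ^ 2 / c := by
  set G : ℂ → ℂ := fun z => conj (deriv F z) * (F z * conj (F z) + c)⁻¹
  have hwirtDBar : (fun z => wirtDBar (fun z' => (Real.log (‖F z'‖ ^ 2 + c) : ℂ)) z) =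
      fun z => F z * G z := by
    funext z
    rw [wirtDBar_eq_of_hasFDerivAt (hasFDerivAt_log_normSq_add (hF z) hc), mul_div_assoc,
      div_eq_mul_inv]
  have hG : DifferentiableAt ℝ G z₀ := by
    refine (conjCLE.differentiableAt.comp z₀ ((hF.deriv z₀).restrictScalars ℝ)).mul
      (DifferentiableAt.inv ?_ (by simp [h0, hc.ne']))
    have hFR := (hF z₀).restrictScalars ℝ
    exact (hFR.mul (conjCLE.differentiableAt.comp z₀ hFR)).add_const _
  have hprod := (hF z₀).hasDerivAt.hasFDerivAt.restrictScalars ℝ |>.mul hG.hasFDerivAt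
  rw [hwirtDBar, wirtD_eq_of_hasFDerivAt (p := G z₀ * deriv F z₀) (q := 0)]
  · simp only [G, h0, map_zero, mul_zero, zero_add, ← mul_conj', div_eq_mul_inv]
    ring
  · refine hprod.congr_fderiv ?_
    ext v
    simp only [h0, zero_smul, zero_add, smul_apply, ContinuousLinearMap.coe_restrictScalars',
      ContinuousLinearMap.toSpanSingleton_apply, smul_eq_mul, wirtingerCLM_apply, zero_mul,
      add_zero]
    ring

end LogNormSqAdd

theorem sum_norm_sq_pos {ι E : Type*} [Fintype ι] [NormedAddCommGroup E] {w : ι → E}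
    (hw : w ≠ 0) : 0 < ∑ j, ‖w j‖ ^ 2 := by
  obtain ⟨j, hj⟩ := Function.ne_iff.mp hw
  exact Finset.sum_pos' (fun _ _ => by positivity)
    ⟨j, Finset.mem_univ j, pow_pos (norm_pos_iff.mpr hj) 2⟩

section EtaPot

variable {r : ℕ} {f : Fin r → ℂ → ℂ} {z₀ : ℂ}

theorem etaPot_eq_fsPot (hz : ∀ j, f j z₀ = 0) : etaPot f z₀ = fsPot := by
  funext w
  simp [etaPot, fsPot, hz]

theorem hasDerivAt_sum_mul {z : ℂ} (hf : ∀ j, DifferentiableAt ℂ (f j) z) (w : Fin r → ℂ) :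
    HasDerivAt (fun z => ∑ j, w j * f j z) (∑ j, w j * deriv (f j) z) z :=
  HasDerivAt.fun_sum fun j _ => (hf j).hasDerivAt.const_mul (w j)

theorem wirtD_etaPot_eq_zero (hf : ∀ j, Differentiable ℂ (f j)) (hz : ∀ j, f j z₀ = 0)
    (w : Fin r → ℂ) : wirtD (fun z => etaPot f z w) z₀ = 0 := by
  rcases eq_or_ne w 0 with rfl | hw
  · -- the potential is then the constant `Real.log 0 = 0`
    simp [etaPot, wirtD]
  · exact wirtD_log_normSq_add_eq_zero
      (hasDerivAt_sum_mul (fun j => hf j z₀) w).differentiableAt (sum_norm_sq_pos hw)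
      (by simp [hz])

theorem wirtD_wirtDBar_etaPot (hf : ∀ j, Differentiable ℂ (f j)) (hz : ∀ j, f j z₀ = 0)
    {w : Fin r → ℂ} (hw : w ≠ 0) :
    wirtD (fun z => wirtDBar (fun z' => etaPot f z' w) z) z₀ =
      (‖∑ j, w j * deriv (f j) z₀‖ : ℂ) ^ 2 / ∑ j, (‖w j‖ : ℂ) ^ 2 := by
  have h := wirtD_wirtDBar_log_normSq_add (F := fun z => ∑ j, w j * f j z) (z₀ := z₀)
    (fun z => (hasDerivAt_sum_mul (fun j => hf j z) w).differentiableAt) (sum_norm_sq_pos hw)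
    (by simp [hz])
  rw [(hasDerivAt_sum_mul (fun j => hf j z₀) w).deriv] at h
  exact_mod_cast h

end EtaPot

/-- The computation inside Lemma 3.6: at a point `z₀` where all the holomorphic
functions `fⱼ` vanish, the `(1,1)`-form `η = (i/2π) ∂∂̄ log(|∑ⱼ wⱼfⱼ(z)|² + |w|²)`
decomposes as `(i/2π)(|∑ⱼ fⱼ'(z₀)wⱼ|²/|w|²) dz∧dz̄ + ω_FS`.  In coordinates this
means: the `(z,z̄)`-coefficient `∂_z∂_z̄ log(…)` equals `|∑ⱼ wⱼ fⱼ'(z₀)|²/|w|²`,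
the mixed `(z, w̄ₖ)`-coefficients vanish, and the `(wⱼ, w̄ₖ)`-coefficients agree
with those of the Fubini–Study potential `log |w|²`. -/
theorem eta_decomposition_at_vanishing_point {r : ℕ}
    (f : Fin r → ℂ → ℂ) (hf : ∀ j, Differentiable ℂ (f j))
    (z₀ : ℂ) (hz : ∀ j, f j z₀ = 0)
    (w : Fin r → ℂ) (hw : w ≠ 0) :
    (wirtD (fun z => wirtDBar (fun z' => etaPot f z' w) z) z₀ =
      (‖∑ j, w j * deriv (f j) z₀‖ : ℂ) ^ 2 /
        ∑ j, (‖w j‖ : ℂ) ^ 2) ∧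
    (∀ k : Fin r,
      wirtDBar (fun t => wirtD (fun z => etaPot f z (Function.update w k t)) z₀)
        (w k) = 0) ∧
    (∀ j k : Fin r,
      wirtD (fun s =>
          wirtDBar (fun t => etaPot f z₀ (Function.update (Function.update w j s) k t))
            (Function.update w j s k)) (w j) =
        wirtD (fun s =>
          wirtDBar (fun t => fsPot (Function.update (Function.update w j s) k t))
            (Function.update w j s k)) (w j)) := by
  refine ⟨wirtD_wirtDBar_etaPot hf hz hw, fun k => ?_, fun j k => by rw [etaPot_eq_fsPot hz]⟩
  simp [wirtD_etaPot_eq_zero hf hz, wirtDBar]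
end
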